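/- Let g : [T₁, ∞) → ℝ≥0 be continuous and satisfy g(t) ≤ C(1+t)^{−3/2}. Suppose h : [T₁, ∞) → ℝ≥0 is measurable with ∫_{T₁}^∞ (1+τ)² h(τ) dτ ≤ C. Then for all t ≥ T₁, ∫_{T₁}^t (1+t−τ)^{−5/4} g(τ)^{1/2} h(τ)^{1/2} dτ ≤ C' (1+t)^{−5/4} for some constant C' independent of t. -/

import Mathlib

/-!
By the weighted AM–GM inequality `√(xy) ≤ (λx + λ⁻¹y)/2` with
`λ = (1+t)^{5/4} / (1+τ)²` (the optimised form of Cauchy–Schwarz), the integrand is at most half of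
`C (1+t)^{5/4} (1+t-τ)^{-5/2} (1+τ)^{-7/2} + (1+t)^{-5/4} (1+τ)² h(τ)`.
The second term integrates to at most `C (1+t)^{-5/4}`. For the first, the convolution
`∫ (1+t-τ)^{-5/2} (1+τ)^{-7/2} dτ` is `O((1+t)^{-5/2})`: at each point one of `1+t-τ`, `1+τ`
is at least `(1+t)/2`, which pulls that factor out and leaves an integrable power.
-/

open MeasureTheory Real

theorem intervalIntegral.integral_mono_on_of_nonneg {μ : Measure ℝ} {f g : ℝ → ℝ} {a b : ℝ}
    (hab : a ≤ b) (hg : IntervalIntegrable g μ a b) (hf : ∀ x ∈ Set.Ioc a b, 0 ≤ f x)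
    (hfg : ∀ x ∈ Set.Ioc a b, f x ≤ g x) : ∫ x in a..b, f x ∂μ ≤ ∫ x in a..b, g x ∂μ := by
  rw [intervalIntegral.integral_of_le hab, intervalIntegral.integral_of_le hab]
  exact integral_mono_of_nonneg ((ae_restrict_iff' measurableSet_Ioc).2 (ae_of_all _ hf)) hg.1
    ((ae_restrict_iff' measurableSet_Ioc).2 (ae_of_all _ hfg))

theorem intervalIntegral.integral_le_setIntegral_Ioi {μ : Measure ℝ} {f : ℝ → ℝ} {a b : ℝ}
    (hab : a ≤ b) (hf : IntegrableOn f (Set.Ioi a) μ) (hf0 : ∀ x ∈ Set.Ioi a, 0 ≤ f x) :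
    ∫ x in a..b, f x ∂μ ≤ ∫ x in Set.Ioi a, f x ∂μ := by
  rw [intervalIntegral.integral_of_le hab]
  exact setIntegral_mono_set hf ((ae_restrict_iff' measurableSet_Ioi).2 (ae_of_all _ hf0))
    Set.Ioc_subset_Ioi_self.eventuallyLE

lemma rpow_neg_le_two_rpow_mul_rpow_neg {x s a : ℝ} (hs : 0 < s) (hsx : s ≤ 2 * x)
    (ha : 0 ≤ a) : x ^ (-a) ≤ 2 ^ a * s ^ (-a) :=
  calc x ^ (-a) ≤ (s / 2) ^ (-a) :=
        rpow_le_rpow_of_nonpos (by positivity) (by linarith) (by linarith)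
    _ = 2 ^ a * s ^ (-a) := by
        rw [div_rpow hs.le zero_le_two, rpow_neg zero_le_two, div_inv_eq_mul, mul_comm]

lemma rpow_neg_mul_rpow_neg_le {x y s a b : ℝ} (hx : 0 < x) (hy : 0 < y) (hs : 0 < s)
    (hsxy : s ≤ x + y) (ha : 0 ≤ a) (hb : 0 ≤ b) :
    x ^ (-a) * y ^ (-b) ≤ 2 ^ a * s ^ (-a) * y ^ (-b) + 2 ^ b * s ^ (-b) * x ^ (-a) := by
  have hxa : 0 ≤ x ^ (-a) := by positivity
  have hyb : 0 ≤ y ^ (-b) := by positivity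
  rcases le_total s (2 * x) with hsx | hsy
  · have := rpow_neg_le_two_rpow_mul_rpow_neg hs hsx ha
    nlinarith [show 0 ≤ 2 ^ b * s ^ (-b) * x ^ (-a) by positivity]
  · have := rpow_neg_le_two_rpow_mul_rpow_neg hs (by linarith : s ≤ 2 * y) hb
    nlinarith [show 0 ≤ 2 ^ a * s ^ (-a) * y ^ (-b) by positivity]

lemma integral_one_add_rpow_neg_le {b T t : ℝ} (hb : 1 < b) (hT : 0 ≤ T) (hTt : T ≤ t) :
    ∫ τ in T..t, (1 + τ) ^ (-b) ≤ (b - 1)⁻¹ := by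
  have hzero : (0 : ℝ) ∉ Set.uIcc (1 + T) (1 + t) := by
    rw [Set.uIcc_of_le (by linarith)]
    exact fun h => by linarith [h.1]
  rw [intervalIntegral.integral_comp_add_left (fun x => x ^ (-b)),
    integral_rpow (Or.inr ⟨by linarith, hzero⟩)]
  have hT_le : (1 + T) ^ (-b + 1) ≤ 1 :=
    rpow_le_one_of_one_le_of_nonpos (by linarith) (by linarith)
  have ht_nonneg : 0 ≤ (1 + t) ^ (-b + 1) := (rpow_pos_of_pos (by linarith) _).le
  have hexp : (b - 1)⁻¹ * (-b + 1) = -1 := by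
    rw [show -b + 1 = -(b - 1) by ring, mul_neg, inv_mul_cancel₀ (by linarith)]
  rw [div_le_iff_of_neg (by linarith), hexp]
  linarith

lemma integral_one_add_sub_rpow_neg_le {a T t : ℝ} (ha : 1 < a) (hTt : T ≤ t) :
    ∫ τ in T..t, (1 + t - τ) ^ (-a) ≤ (a - 1)⁻¹ := by
  simp_rw [add_sub_assoc]
  rw [intervalIntegral.integral_comp_sub_left (fun x => (1 + x) ^ (-a)), sub_self]
  exact integral_one_add_rpow_neg_le ha le_rfl (by linarith)

lemma continuousOn_one_add_rpow {T t : ℝ} (p : ℝ) (hT : -1 < T) (hTt : T ≤ t) :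
    ContinuousOn (fun τ : ℝ => (1 + τ) ^ p) (Set.uIcc T t) := by
  refine ContinuousOn.rpow_const (by fun_prop) fun τ hτ => Or.inl ?_
  rw [Set.uIcc_of_le hTt] at hτ
  exact (by linarith [hτ.1] : (0 : ℝ) < 1 + τ).ne'

lemma continuousOn_one_add_sub_rpow {T t : ℝ} (p : ℝ) (hTt : T ≤ t) :
    ContinuousOn (fun τ : ℝ => (1 + t - τ) ^ p) (Set.uIcc T t) := by
  refine ContinuousOn.rpow_const (by fun_prop) fun τ hτ => Or.inl ?_
  rw [Set.uIcc_of_le hTt] at hτ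
  exact (by linarith [hτ.2] : (0 : ℝ) < 1 + t - τ).ne'

lemma intervalIntegrable_one_add_sub_rpow_mul_one_add_rpow {T t : ℝ} (p q : ℝ) (hT : -1 < T)
    (hTt : T ≤ t) :
    IntervalIntegrable (fun τ => (1 + t - τ) ^ p * (1 + τ) ^ q) volume T t :=
  ((continuousOn_one_add_sub_rpow p hTt).mul
    (continuousOn_one_add_rpow q hT hTt)).intervalIntegrable

lemma integral_one_add_sub_rpow_neg_mul_one_add_rpow_neg_le {a b T t : ℝ} (ha : 1 < a)
    (hab : a ≤ b) (hT : 0 ≤ T) (hTt : T ≤ t) :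
    ∫ τ in T..t, (1 + t - τ) ^ (-a) * (1 + τ) ^ (-b)
      ≤ (2 ^ a / (b - 1) + 2 ^ b / (a - 1)) * (1 + t) ^ (-a) := by
  have hs : 0 < 1 + t := by linarith
  have hint₁ : IntervalIntegrable (fun τ => 2 ^ a * (1 + t) ^ (-a) * (1 + τ) ^ (-b))
      volume T t :=
    (continuousOn_const.mul (continuousOn_one_add_rpow _ (by linarith) hTt)).intervalIntegrable
  have hint₂ : IntervalIntegrable (fun τ => 2 ^ b * (1 + t) ^ (-b) * (1 + t - τ) ^ (-a))
      volume T t :=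
    (continuousOn_const.mul (continuousOn_one_add_sub_rpow _ hTt)).intervalIntegrable
  have hsa : 0 ≤ 2 ^ a * (1 + t) ^ (-a) := mul_nonneg (by positivity) (rpow_pos_of_pos hs _).le
  have hsb : 0 ≤ 2 ^ b * (1 + t) ^ (-b) := mul_nonneg (by positivity) (rpow_pos_of_pos hs _).le
  have hdecay : (1 + t) ^ (-b) ≤ (1 + t) ^ (-a) :=
    rpow_le_rpow_of_exponent_le (by linarith) (by linarith)
  calc ∫ τ in T..t, (1 + t - τ) ^ (-a) * (1 + τ) ^ (-b)
      ≤ ∫ τ in T..t, (2 ^ a * (1 + t) ^ (-a) * (1 + τ) ^ (-b)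
          + 2 ^ b * (1 + t) ^ (-b) * (1 + t - τ) ^ (-a)) :=
        intervalIntegral.integral_mono_on hTt
          (intervalIntegrable_one_add_sub_rpow_mul_one_add_rpow _ _ (by linarith) hTt)
          (hint₁.add hint₂) fun τ hτ =>
            rpow_neg_mul_rpow_neg_le (by linarith [hτ.2]) (by linarith [hτ.1]) hs
              (by linarith) (by linarith) (by linarith)
    _ = 2 ^ a * (1 + t) ^ (-a) * (∫ τ in T..t, (1 + τ) ^ (-b))
          + 2 ^ b * (1 + t) ^ (-b) * ∫ τ in T..t, (1 + t - τ) ^ (-a) := by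
        rw [intervalIntegral.integral_add hint₁ hint₂, intervalIntegral.integral_const_mul,
          intervalIntegral.integral_const_mul]
    _ ≤ 2 ^ a * (1 + t) ^ (-a) * (b - 1)⁻¹ + 2 ^ b * (1 + t) ^ (-b) * (a - 1)⁻¹ := by
        gcongr
        · exact integral_one_add_rpow_neg_le (by linarith) hT hTt
        · exact integral_one_add_sub_rpow_neg_le ha hTt
    _ ≤ 2 ^ a * (1 + t) ^ (-a) * (b - 1)⁻¹ + 2 ^ b * (1 + t) ^ (-a) * (a - 1)⁻¹ := by
        gcongr
    _ = (2 ^ a / (b - 1) + 2 ^ b / (a - 1)) * (1 + t) ^ (-a) := by ring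

lemma rpow_half_mul_rpow_half_le {x y l : ℝ} (hx : 0 ≤ x) (hy : 0 ≤ y) (hl : 0 < l) :
    x ^ (1 / 2 : ℝ) * y ^ (1 / 2 : ℝ) ≤ (l * x + l⁻¹ * y) / 2 := by
  have h := geom_mean_le_arith_mean2_weighted (w₁ := 1 / 2) (w₂ := 1 / 2) (p₁ := l * x)
    (p₂ := l⁻¹ * y) (by norm_num) (by norm_num) (by positivity) (by positivity) (by norm_num)
  rw [← mul_rpow (by positivity) (by positivity), mul_mul_mul_comm, mul_inv_cancel₀ hl.ne',
    one_mul, mul_rpow hx hy] at h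
  linarith

lemma convolution_integrand_le_young {C G H t τ : ℝ} (hτ : -1 < τ) (hτt : τ ≤ t) (hG : 0 ≤ G)
    (hGC : G ≤ C * (1 + τ) ^ (-(3 : ℝ) / 2)) (hH : 0 ≤ H) :
    (1 + t - τ) ^ (-(5 : ℝ) / 4) * G ^ ((1 : ℝ) / 2) * H ^ ((1 : ℝ) / 2)
      ≤ (C * (1 + t) ^ ((5 : ℝ) / 4) * ((1 + t - τ) ^ (-(5 / 2 : ℝ)) * (1 + τ) ^ (-(7 / 2 : ℝ)))
        + (1 + t) ^ (-(5 : ℝ) / 4) * ((1 + τ) ^ 2 * H)) / 2 := by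
  have hx : 0 < 1 + t - τ := by linarith
  have hy : 0 < 1 + τ := by linarith
  have hs : 0 < 1 + t := by linarith
  set l := (1 + t) ^ ((5 : ℝ) / 4) / (1 + τ) ^ 2
  have hkernel : (1 + t - τ) ^ (-(5 : ℝ) / 4) = ((1 + t - τ) ^ (-(5 / 2 : ℝ))) ^ (1 / 2 : ℝ) := by
    rw [← rpow_mul hx.le]; norm_num
  have hweight : (1 + τ) ^ (-(3 : ℝ) / 2) / (1 + τ) ^ 2 = (1 + τ) ^ (-(7 / 2 : ℝ)) := by
    rw [← rpow_natCast, ← rpow_sub hy]; norm_num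
  have hl_inv : l⁻¹ = (1 + t) ^ (-(5 : ℝ) / 4) * (1 + τ) ^ 2 := by
    rw [inv_div, neg_div, rpow_neg hs.le, div_eq_inv_mul]
  calc (1 + t - τ) ^ (-(5 : ℝ) / 4) * G ^ ((1 : ℝ) / 2) * H ^ ((1 : ℝ) / 2)
      = ((1 + t - τ) ^ (-(5 / 2 : ℝ)) * G) ^ (1 / 2 : ℝ) * H ^ (1 / 2 : ℝ) := by
        rw [hkernel, mul_rpow (by positivity) hG]
    _ ≤ (l * ((1 + t - τ) ^ (-(5 / 2 : ℝ)) * G) + l⁻¹ * H) / 2 :=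
        rpow_half_mul_rpow_half_le (by positivity) hH (by positivity)
    _ ≤ (l * ((1 + t - τ) ^ (-(5 / 2 : ℝ)) * (C * (1 + τ) ^ (-(3 : ℝ) / 2))) + l⁻¹ * H) / 2 := by
        gcongr
    _ = _ := by rw [hl_inv, ← hweight]; ring

lemma integral_convolution_integrand_le_young {C T t : ℝ} {g h : ℝ → ℝ} (hT : -1 < T)
    (hTt : T ≤ t) (hg0 : ∀ τ ∈ Set.Ioc T t, 0 ≤ g τ)
    (hg : ∀ τ ∈ Set.Ioc T t, g τ ≤ C * (1 + τ) ^ (-(3 : ℝ) / 2))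
    (hh0 : ∀ τ ∈ Set.Ioc T t, 0 ≤ h τ)
    (hh : IntervalIntegrable (fun τ => (1 + τ) ^ 2 * h τ) volume T t) :
    ∫ τ in T..t, (1 + t - τ) ^ (-(5 : ℝ) / 4) * g τ ^ ((1 : ℝ) / 2) * h τ ^ ((1 : ℝ) / 2)
      ≤ (C * (1 + t) ^ ((5 : ℝ) / 4)
            * (∫ τ in T..t, (1 + t - τ) ^ (-(5 / 2 : ℝ)) * (1 + τ) ^ (-(7 / 2 : ℝ)))
          + (1 + t) ^ (-(5 : ℝ) / 4) * ∫ τ in T..t, (1 + τ) ^ 2 * h τ) / 2 := by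
  have hkernel := intervalIntegrable_one_add_sub_rpow_mul_one_add_rpow (-(5 / 2 : ℝ))
    (-(7 / 2 : ℝ)) hT hTt
  calc _ ≤ ∫ τ in T..t, (C * (1 + t) ^ ((5 : ℝ) / 4) * ((1 + t - τ) ^ (-(5 / 2 : ℝ))
            * (1 + τ) ^ (-(7 / 2 : ℝ))) + (1 + t) ^ (-(5 : ℝ) / 4) * ((1 + τ) ^ 2 * h τ)) / 2 :=
        intervalIntegral.integral_mono_on_of_nonneg hTt
          (((hkernel.const_mul _).add (hh.const_mul _)).div_const 2)
          (fun τ hτ => mul_nonneg (mul_nonneg (rpow_nonneg (by linarith [hτ.2]) _)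
            (rpow_nonneg (hg0 τ hτ) _)) (rpow_nonneg (hh0 τ hτ) _))
          fun τ hτ => convolution_integrand_le_young (by linarith [hτ.1]) hτ.2 (hg0 τ hτ)
            (hg τ hτ) (hh0 τ hτ)
    _ = _ := by
        rw [intervalIntegral.integral_div, intervalIntegral.integral_add (hkernel.const_mul _)
          (hh.const_mul _), intervalIntegral.integral_const_mul,
          intervalIntegral.integral_const_mul]

theorem hoelder_convolution_step_general (T₁ C : ℝ) (hT₁ : 0 ≤ T₁) (hC : 0 < C)
    (g h : ℝ → ℝ)
    (hg0 : ∀ τ, T₁ ≤ τ → 0 ≤ g τ)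
    (hg : ∀ τ, T₁ ≤ τ → g τ ≤ C * (1 + τ) ^ (-(3 : ℝ) / 2))
    (hh0 : ∀ τ, T₁ ≤ τ → 0 ≤ h τ)
    (hh : (∫ τ in Set.Ioi T₁, (1 + τ) ^ 2 * h τ) ≤ C)
    (hhint : IntegrableOn (fun τ => (1 + τ) ^ 2 * h τ) (Set.Ioi T₁)) :
    ∃ C' > 0, ∀ t, T₁ ≤ t →
      (∫ τ in T₁..t, (1 + t - τ) ^ (-(5 : ℝ) / 4) * (g τ) ^ ((1 : ℝ) / 2) * (h τ) ^ ((1 : ℝ) / 2))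
        ≤ C' * (1 + t) ^ (-(5 : ℝ) / 4) := by
  set M : ℝ := 2 ^ (5 / 2 : ℝ) / (7 / 2 - 1) + 2 ^ (7 / 2 : ℝ) / (5 / 2 - 1)
  refine ⟨C * (M + 1) / 2, by norm_num [M]; positivity, fun t ht => ?_⟩
  have hweighted : IntervalIntegrable (fun τ => (1 + τ) ^ 2 * h τ) volume T₁ t :=
    (intervalIntegrable_iff_integrableOn_Ioc_of_le ht).2 (hhint.mono_set Set.Ioc_subset_Ioi_self)
  have hweighted_le : ∫ τ in T₁..t, (1 + τ) ^ 2 * h τ ≤ C :=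
    (intervalIntegral.integral_le_setIntegral_Ioi ht hhint fun τ hτ =>
      mul_nonneg (sq_nonneg _) (hh0 τ (le_of_lt hτ))).trans hh
  have hs : 0 < 1 + t := by linarith
  have hpow : (1 + t) ^ ((5 : ℝ) / 4) * (1 + t) ^ (-(5 / 2 : ℝ)) = (1 + t) ^ (-(5 : ℝ) / 4) := by
    rw [← rpow_add hs]; norm_num
  calc _ ≤ _ := integral_convolution_integrand_le_young (by linarith) ht
          (fun τ hτ => hg0 τ hτ.1.le) (fun τ hτ => hg τ hτ.1.le) (fun τ hτ => hh0 τ hτ.1.le)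
          hweighted
    _ ≤ (C * (1 + t) ^ ((5 : ℝ) / 4) * (M * (1 + t) ^ (-(5 / 2 : ℝ)))
          + (1 + t) ^ (-(5 : ℝ) / 4) * C) / 2 := by
        gcongr
        exact integral_one_add_sub_rpow_neg_mul_one_add_rpow_neg_le (by norm_num) (by norm_num)
          hT₁ ht
    _ = C * (M + 1) / 2 * (1 + t) ^ (-(5 : ℝ) / 4) := by linear_combination (C * M / 2) * hpow

/-- Hölder-inequality step (2.47): if `g(τ) ≤ C (1+τ)^(−3/2)` on `[T₁, ∞)` and
`∫_{T₁}^∞ (1+τ)² h(τ) dτ ≤ C`, then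
`∫_{T₁}^t (1+t−τ)^(−5/4) g(τ)^{1/2} h(τ)^{1/2} dτ ≤ C' (1+t)^(−5/4)` for all `t ≥ T₁`. -/
theorem hoelder_convolution_step (T₁ C : ℝ) (hT₁ : 0 ≤ T₁) (hC : 0 < C)
    (g h : ℝ → ℝ)
    (hgcont : ContinuousOn g (Set.Ici T₁))
    (hg0 : ∀ τ, T₁ ≤ τ → 0 ≤ g τ)
    (hg : ∀ τ, T₁ ≤ τ → g τ ≤ C * (1 + τ) ^ (-(3 : ℝ) / 2))
    (hhm : Measurable h) (hh0 : ∀ τ, T₁ ≤ τ → 0 ≤ h τ)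
    (hh : (∫ τ in Set.Ioi T₁, (1 + τ) ^ 2 * h τ) ≤ C)
    (hhint : IntegrableOn (fun τ => (1 + τ) ^ 2 * h τ) (Set.Ioi T₁)) :
    ∃ C' > 0, ∀ t, T₁ ≤ t →
      (∫ τ in T₁..t, (1 + t - τ) ^ (-(5 : ℝ) / 4) * (g τ) ^ ((1 : ℝ) / 2) * (h τ) ^ ((1 : ℝ) / 2))
        ≤ C' * (1 + t) ^ (-(5 : ℝ) / 4) :=
  hoelder_convolution_step_general T₁ C hT₁ hC g h hg0 hg hh0 hh hhint
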